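/- arXiv:1911.12823 — 6 statements merged into one kernel-verified Lean document; each statement's English description precedes it below -/
import Mathlib

section
/- For every natural number i with i ≥ 2, every natural number d with 2^i ≤ d ≤ 2^(i+1) − 3, and every e ∈ {2^i − 2, 2^i − 1}, the binomial coefficient C(d, e) is even (i.e., C(d, e) ≡ 0 (mod 2)). -/
/-!
Write `d = 2^i + r`; the bounds give `r < e < 2^i`. By Vandermonde,
`C(2^i + r, e) = ∑_{a + b = e} C(2^i, a) C(r, b)`. The term `a = 0` is `C(r, e) = 0`, the term
`a = 2^i` does not occur since `e < 2^i`, and every other `C(2^i, a)` is even.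
-/

theorem Nat.Prime.dvd_choose_pow_add {p k r e : ℕ} (hp : p.Prime) (hre : r < e) (he : e < p ^ k) :
    p ∣ (p ^ k + r).choose e := by
  rw [Nat.add_choose_eq]
  refine Finset.dvd_sum fun ab hab => ?_
  rw [Finset.HasAntidiagonal.mem_antidiagonal] at hab
  rcases Nat.eq_zero_or_pos ab.1 with ha | ha
  · have hb : ab.2 = e := by omega
    simp [hb, Nat.choose_eq_zero_of_lt hre]
  · exact (hp.dvd_choose_pow ha.ne' (by omega)).mul_right _

theorem gap_lemma_general (i d e : ℕ) (hd1 : 2 ^ i ≤ d) (hd2 : d ≤ 2 ^ (i + 1) - 3)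
    (he : e = 2 ^ i - 2 ∨ e = 2 ^ i - 1) :
    Nat.choose d e % 2 = 0 := by
  obtain ⟨r, rfl⟩ := Nat.exists_eq_add_of_le hd1
  have hpow : 2 ^ (i + 1) = 2 ^ i + 2 ^ i := by ring
  have hpos : 0 < 2 ^ i := Nat.two_pow_pos i
  exact Nat.mod_eq_zero_of_dvd (Nat.prime_two.dvd_choose_pow_add (by omega) (by omega))

/-- Gap Lemma: for `i ≥ 2` and `2^i ≤ d ≤ 2^(i+1) - 3`, the binomial coefficient
`C(d, e)` is even for `e ∈ {2^i - 2, 2^i - 1}`. -/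
theorem gap_lemma (i d e : ℕ) (hi : 2 ≤ i) (hd1 : 2 ^ i ≤ d) (hd2 : d ≤ 2 ^ (i + 1) - 3)
    (he : e = 2 ^ i - 2 ∨ e = 2 ^ i - 1) :
    Nat.choose d e % 2 = 0 :=
  gap_lemma_general i d e hd1 hd2 he
end

section
/- Let F be a finite field of characteristic 2 with |F| = 2^m for some m > 2. Let i ≥ 2 and let d be an even natural number with 2^i ≤ d ≤ 2^(i+1) − 3, and let P ∈ F[X] be a permutation polynomial with natural degree d. Then there exists b ∈ F such that, in the polynomial P(X + b) (i.e., P.comp(X + C b)), either the coefficient of X^(2^i − 1) is zero or the coefficient of X^(2^i − 2) is zero. -/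
open Polynomial

/-!
In characteristic `p`, the coefficient of `X^k`, `k = p^i - 2`, in `P(X + b) = ∑ pₙ (X + b)ⁿ` is
`∑ₙ n.choose k * pₙ * b^(n - k)`. When `deg P ≤ 2p^i - 3`, every `n ≥ k + 2` is `p^i + r` with
`r < k < p^i`, so `p ∣ n.choose k` (Vandermonde). Since `k + 1 = p^i - 1 ≡ -1`, the coefficient is
`p_k - p_{k+1} b`, which vanishes at `b = p_k / p_{k+1}` unless `p_{k+1} = 0` already.
-/

theorem Nat.Prime.dvd_choose_of_sub_lt {p i n k : ℕ} (hp : p.Prime) (hk : k < p ^ i)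
    (hn : p ^ i ≤ n) (hnk : n - p ^ i < k) : p ∣ n.choose k := by
  obtain ⟨r, rfl⟩ : ∃ r, n = p ^ i + r := ⟨n - p ^ i, by omega⟩
  rw [Nat.add_choose_eq]
  refine Finset.dvd_sum fun ⟨t₁, t₂⟩ ht => ?_
  rw [Finset.HasAntidiagonal.mem_antidiagonal] at ht
  rcases Nat.eq_zero_or_pos t₁ with rfl | ht₁
  · simp [Nat.choose_eq_zero_of_lt (by omega : r < t₂)]
  · exact (hp.dvd_choose_pow ht₁.ne' (by omega)).mul_right _

section CharP

variable {R : Type*} [CommRing R] {p : ℕ} [CharP R p] {i : ℕ} {P : R[X]}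

theorem coeff_hasseDeriv_pow_sub_two_eq_zero (hp : p.Prime) (hi : i ≠ 0)
    (hP : P.natDegree ≤ 2 * p ^ i - 3) {n : ℕ} (hn : 2 ≤ n) :
    (hasseDeriv (p ^ i - 2) P).coeff n = 0 := by
  have hpi : 2 ≤ p ^ i := hp.two_le.trans (Nat.le_self_pow hi p)
  rw [hasseDeriv_coeff]
  by_cases hnP : n + (p ^ i - 2) ≤ P.natDegree
  · have hdvd := hp.dvd_choose_of_sub_lt (n := n + (p ^ i - 2)) (k := p ^ i - 2) (i := i)
      (by omega) (by omega) (by omega)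
    rw [(CharP.cast_eq_zero_iff R p _).mpr hdvd, zero_mul]
  · rw [coeff_eq_zero_of_natDegree_lt (by omega), mul_zero]

theorem natCast_pow_sub_one_eq_neg_one (hp : p ≠ 0) (hi : i ≠ 0) :
    ((p ^ i - 1 : ℕ) : R) = -1 := by
  rw [Nat.cast_sub (Nat.one_le_pow _ _ (Nat.pos_of_ne_zero hp)), Nat.cast_pow, CharP.cast_eq_zero,
    zero_pow hi, zero_sub, Nat.cast_one]

theorem coeff_taylor_pow_sub_two (hp : p.Prime) (hi : i ≠ 0)
    (hP : P.natDegree ≤ 2 * p ^ i - 3) (b : R) :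
    (taylor b P).coeff (p ^ i - 2) = P.coeff (p ^ i - 2) - P.coeff (p ^ i - 1) * b := by
  have hpi : 2 ≤ p ^ i := hp.two_le.trans (Nat.le_self_pow hi p)
  have hdeg : (hasseDeriv (p ^ i - 2) P).natDegree < 2 := Nat.lt_succ_of_le <|
    natDegree_le_iff_coeff_eq_zero.mpr fun n hn => coeff_hasseDeriv_pow_sub_two_eq_zero hp hi hP hn
  have hsucc : 1 + (p ^ i - 2) = p ^ i - 1 := by omega
  have hchoose : (p ^ i - 1).choose (p ^ i - 2) = p ^ i - 1 := by
    rw [← hsucc, add_comm, Nat.choose_succ_self_right]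
  rw [taylor_coeff, eval_eq_sum_range' hdeg, Finset.sum_range_succ, Finset.sum_range_one,
    hasseDeriv_coeff, hasseDeriv_coeff, zero_add, hsucc, Nat.choose_self, hchoose,
    natCast_pow_sub_one_eq_neg_one hp.ne_zero hi]
  ring

end CharP

theorem b_normalization_shift_general (F : Type*) [Field F]
    [CharP F 2]
    (i : ℕ) (hi : 2 ≤ i) (d : ℕ) (hd2 : d ≤ 2 ^ (i + 1) - 3)
    (P : Polynomial F) (hdeg : P.natDegree = d) :
    ∃ b : F, (P.comp (X + C b)).coeff (2 ^ i - 1) = 0 ∨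
      (P.comp (X + C b)).coeff (2 ^ i - 2) = 0 := by
  by_cases ha : P.coeff (2 ^ i - 1) = 0
  · exact ⟨0, Or.inl (by simpa using ha)⟩
  have hP : P.natDegree ≤ 2 * 2 ^ i - 3 := by rw [hdeg, ← pow_succ']; exact hd2
  refine ⟨P.coeff (2 ^ i - 2) / P.coeff (2 ^ i - 1), Or.inr ?_⟩
  rw [← taylor_apply, coeff_taylor_pow_sub_two Nat.prime_two (by omega) hP,
    mul_div_cancel₀ _ ha, sub_self]

/-- Over a finite field of characteristic 2 with `2^m` elements (`m > 2`), any permutation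
polynomial of even degree `d` with `2^i ≤ d ≤ 2^(i+1) - 3` (`i ≥ 2`) admits a shift `x ↦ x + b`
after which the coefficient of `X^(2^i - 1)` or of `X^(2^i - 2)` is zero. -/
theorem b_normalization_shift (F : Type*) [Field F] [Fintype F] (m : ℕ) (hm : 2 < m)
    [CharP F 2] (hcard : Fintype.card F = 2 ^ m)
    (i : ℕ) (hi : 2 ≤ i) (d : ℕ) (hdeven : Even d) (hd1 : 2 ^ i ≤ d) (hd2 : d ≤ 2 ^ (i + 1) - 3)
    (P : Polynomial F) (hdeg : P.natDegree = d)
    (hPP : Function.Bijective fun x => P.eval x) :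
    ∃ b : F, (P.comp (X + C b)).coeff (2 ^ i - 1) = 0 ∨
      (P.comp (X + C b)).coeff (2 ^ i - 2) = 0 :=
  b_normalization_shift_general F i hi d hd2 P hdeg
end

section
/- Let F be a finite field of odd characteristic p, and let P ∈ F[X] be a permutation polynomial whose natural degree d satisfies d ≥ 2 and p ∣ d. Then there exist a, b, c ∈ F with a ≠ 0 such that the polynomial Q = a·P(X + b) + c (i.e., C a * P.comp(X + C b) + C c) is a permutation polynomial which is monic of degree d, satisfies Q(0) = 0, and has either its coefficient of X^(d−1) equal to zero or its coefficient of X^(d−2) equal to zero. -/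
/-!
Take `a` to be the inverse of the leading coefficient and `c = -a P(b)`, so that `Q` is monic with
`Q(0) = 0` for every shift `b`; it remains to choose `b`. In `P(X + b)` the coefficients of
`X^(d-1)` and `X^(d-2)` are `P_{d-1} + d b P_d` and `P_{d-2} + (d-1) b P_{d-1} + C(d,2) b² P_d`.
As `p ∣ d` and `p` is odd, `d` and `C(d,2)` vanish in `F`, so these are `P_{d-1}` and
`P_{d-2} - b P_{d-1}`: either the first is already zero, or `b = P_{d-2} / P_{d-1}` kills the second.
-/

open Polynomial

namespace Polynomial

section Taylor

variable {R : Type*} [CommSemiring R] {f : R[X]} {n : ℕ}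

theorem coeff_taylor_eq_sum_range {m : ℕ} (h : f.natDegree ≤ n + m) (r : R) :
    (taylor r f).coeff n =
      ∑ i ∈ Finset.range (m + 1), ((n + i).choose n : R) * f.coeff (n + i) * r ^ i := by
  have hlt : (hasseDeriv n f).natDegree < m + 1 := by
    have := f.natDegree_hasseDeriv_le n
    omega
  simp only [taylor_coeff, eval_eq_sum_range' hlt, hasseDeriv_coeff, add_comm _ n]

theorem coeff_taylor_of_natDegree_le_add_two (h : f.natDegree ≤ n + 2) (r : R) :
    (taylor r f).coeff n = f.coeff n + (n + 1) * r * f.coeff (n + 1) +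
      ((n + 2).choose 2 : R) * r ^ 2 * f.coeff (n + 2) := by
  rw [coeff_taylor_eq_sum_range h, Finset.sum_range_succ, Finset.sum_range_succ,
    Finset.sum_range_one, Nat.choose_symm_add (a := n) (b := 2)]
  simp
  ring

end Taylor

section AffineTransform

variable {F : Type*} [Field F] {P : F[X]}

theorem coeff_C_mul_comp_X_add_C_add_C {k : ℕ} (hk : k ≠ 0) (a b c : F) :
    (C a * P.comp (X + C b) + C c).coeff k = a * (taylor b P).coeff k := by
  rw [coeff_add, coeff_C_of_ne_zero hk, add_zero, coeff_C_mul, taylor_apply]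

theorem natDegree_C_mul_comp_X_add_C_add_C {a : F} (ha : a ≠ 0) (b c : F) :
    (C a * P.comp (X + C b) + C c).natDegree = P.natDegree := by
  rw [natDegree_add_C, natDegree_C_mul ha, natDegree_comp, natDegree_X_add_C, mul_one]

theorem monic_C_leadingCoeff_inv_mul_comp_X_add_C_add_C (hP : P.natDegree ≠ 0) (b c : F) :
    (C P.leadingCoeff⁻¹ * P.comp (X + C b) + C c).Monic := by
  have hlc : P.leadingCoeff ≠ 0 := leadingCoeff_ne_zero.2 (by rintro rfl; simp at hP)
  rw [Monic, leadingCoeff, natDegree_C_mul_comp_X_add_C_add_C (inv_ne_zero hlc),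
    coeff_C_mul_comp_X_add_C_add_C hP, coeff_taylor_natDegree, inv_mul_cancel₀ hlc]

theorem bijective_eval_C_mul_comp_X_add_C_add_C (hP : Function.Bijective fun x => P.eval x)
    {a : F} (ha : a ≠ 0) (b c : F) :
    Function.Bijective fun x => (C a * P.comp (X + C b) + C c).eval x := by
  have hfactor : (fun x => (C a * P.comp (X + C b) + C c).eval x) =
      Equiv.addRight c ∘ Equiv.mulLeft₀ a ha ∘ (fun x => P.eval x) ∘ Equiv.addRight b := by
    funext x
    simp [eval_comp]
  rw [hfactor]
  exact (Equiv.addRight c).bijective.comp <| (Equiv.mulLeft₀ a ha).bijective.comp <|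
    hP.comp (Equiv.addRight b).bijective

end AffineTransform

theorem exists_coeff_taylor_eq_zero {F : Type*} [Field F] {P : F[X]} {n : ℕ}
    (hdeg : P.natDegree = n + 2) (hd : ((n + 2 : ℕ) : F) = 0)
    (hchoose : ((n + 2).choose 2 : F) = 0) :
    ∃ b : F, (taylor b P).coeff (n + 1) = 0 ∨ (taylor b P).coeff n = 0 := by
  by_cases hsub : P.coeff (n + 1) = 0
  · exact ⟨0, Or.inl (by rw [taylor_zero, hsub])⟩
  refine ⟨P.coeff n / P.coeff (n + 1), Or.inr ?_⟩
  have hpred : (n + 1 : F) = -1 := by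
    push_cast at hd
    linear_combination hd
  rw [coeff_taylor_of_natDegree_le_add_two hdeg.le, hchoose, hpred]
  field_simp
  ring

end Polynomial

theorem m_normalization_general (F : Type*) [Field F] (p : ℕ) [CharP F p]
    (hodd : Odd p) (P : Polynomial F) (d : ℕ) (hdeg : P.natDegree = d) (hd2 : 2 ≤ d)
    (hdvd : p ∣ d) (hPP : Function.Bijective fun x => P.eval x) :
    ∃ a b c : F, a ≠ 0 ∧
      (Function.Bijective fun x =>
          (C a * P.comp (X + C b) + C c).eval x) ∧
      (C a * P.comp (X + C b) + C c).Monic ∧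
      (C a * P.comp (X + C b) + C c).natDegree = d ∧
      (C a * P.comp (X + C b) + C c).eval 0 = 0 ∧
      ((C a * P.comp (X + C b) + C c).coeff (d - 1) = 0 ∨
        (C a * P.comp (X + C b) + C c).coeff (d - 2) = 0) := by
  have htwo : (2 : F) ≠ 0 := Ring.two_ne_zero <| by
    rw [ringChar.eq F p]
    rintro rfl
    exact Nat.not_odd_iff_even.2 even_two hodd
  have hdF : (d : F) = 0 := (CharP.cast_eq_zero_iff F p d).2 hdvd
  have hchoose : (d.choose 2 : F) = 0 := by
    have : NeZero (2 : F) := ⟨htwo⟩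
    rw [Nat.cast_choose_two, hdF, zero_mul, zero_div]
  obtain ⟨n, rfl⟩ : ∃ n, d = n + 2 := ⟨d - 2, by omega⟩
  have hn : n ≠ 0 := by
    rintro rfl
    exact htwo (by simpa using hdF)
  have hlc : P.leadingCoeff ≠ 0 := leadingCoeff_ne_zero.2 (by rintro rfl; simp at hdeg)
  obtain ⟨b, hb⟩ := exists_coeff_taylor_eq_zero hdeg hdF hchoose
  refine ⟨P.leadingCoeff⁻¹, b, -(P.leadingCoeff⁻¹ * P.eval b), inv_ne_zero hlc,
    bijective_eval_C_mul_comp_X_add_C_add_C hPP (inv_ne_zero hlc) _ _,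
    monic_C_leadingCoeff_inv_mul_comp_X_add_C_add_C (by omega) _ _,
    (natDegree_C_mul_comp_X_add_C_add_C (inv_ne_zero hlc) _ _).trans hdeg,
    by simp [eval_comp], ?_⟩
  rw [Nat.add_sub_cancel, show n + 2 - 1 = n + 1 by omega,
    coeff_C_mul_comp_X_add_C_add_C n.succ_ne_zero, coeff_C_mul_comp_X_add_C_add_C hn]
  exact hb.imp (fun h => by rw [h, mul_zero]) (fun h => by rw [h, mul_zero])

/-- m-normalization: over a finite field of odd characteristic `p`, any permutation polynomial
of degree `d ≥ 2` with `p ∣ d` can be transformed by `P ↦ a·P(X + b) + c` (`a ≠ 0`) into a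
permutation polynomial `Q` that is monic of degree `d`, satisfies `Q(0) = 0`, and whose
coefficient of `X^(d-1)` or of `X^(d-2)` is zero. -/
theorem m_normalization (F : Type*) [Field F] [Fintype F] (p : ℕ) [Fact p.Prime] [CharP F p]
    (hodd : Odd p) (P : Polynomial F) (d : ℕ) (hdeg : P.natDegree = d) (hd2 : 2 ≤ d)
    (hdvd : p ∣ d) (hPP : Function.Bijective fun x => P.eval x) :
    ∃ a b c : F, a ≠ 0 ∧
      (Function.Bijective fun x =>
          (C a * P.comp (X + C b) + C c).eval x) ∧
      (C a * P.comp (X + C b) + C c).Monic ∧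
      (C a * P.comp (X + C b) + C c).natDegree = d ∧
      (C a * P.comp (X + C b) + C c).eval 0 = 0 ∧
      ((C a * P.comp (X + C b) + C c).coeff (d - 1) = 0 ∨
        (C a * P.comp (X + C b) + C c).coeff (d - 2) = 0) :=
  m_normalization_general F p hodd P d hdeg hd2 hdvd hPP
end

section
/- Let F be a finite field of characteristic 2 with |F| = 2^m for some m > 2, let i ≥ 2, let d be an even natural number with 2^i ≤ d ≤ 2^(i+1) − 3, and let P ∈ F[X] be a permutation polynomial of natural degree d. Then there exist a, b, c ∈ F with a ≠ 0 such that Q = a·P(X + b) + c (i.e., C a * P.comp(X + C b) + C c) is a permutation polynomial which is monic of degree d, satisfies Q(0) = 0, and has either its coefficient of X^(2^i − 1) equal to zero or its coefficient of X^(2^i − 2) equal to zero. -/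
/-! Put `N = 2 ^ i`. Lucas' theorem in base `N` shows that `choose n k` is even whenever
`k < N` and `n % N < k`. As `deg P < 2N - 2`, this kills every term of the Hasse derivatives of
`P` of orders `N - 1` and `N - 2` except the lowest ones, so the coefficients of `X^(N-1)` and
`X^(N-2)` in `P(X + b)` are `p_{N-1}` and `p_{N-2} - p_{N-1} b`. Hence `b = 0` works if
`p_{N-1} = 0`, and `b = p_{N-2} / p_{N-1}` otherwise. Scaling by the inverse of the leading
coefficient and subtracting the value at `b` keeps the map bijective and makes it monic and zero
at `0`. -/

namespace Choose

variable {n k p : ℕ} [Fact p.Prime]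

theorem choose_modEq_choose_mod_pow {a : ℕ} (hk : k < p ^ a) :
    n.choose k ≡ (n % p ^ a).choose k [MOD p] := by
  have hp : 0 < p := (Fact.out : p.Prime).pos
  have digits_eq : ∀ j ∈ Finset.range a, n % p ^ a / p ^ j % p = n / p ^ j % p := by
    intro j hj
    rw [← Nat.sub_add_cancel (Finset.mem_range.mp hj).le, pow_add, mul_comm,
      Nat.mod_mul_right_div_self,
      Nat.mod_mod_of_dvd _ (dvd_pow_self p (Nat.sub_ne_zero_of_lt (Finset.mem_range.mp hj)))]
  rw [← Int.natCast_modEq_iff]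
  refine (choose_modEq_choose_mul_prod_range_choose a).trans ?_
  refine Int.ModEq.symm ((choose_modEq_prod_range_choose (Nat.mod_lt _ (pow_pos hp a)) hk).trans ?_)
  rw [Nat.div_eq_of_lt hk, Nat.choose_zero_right, Nat.cast_one, one_mul,
    Finset.prod_congr rfl fun j hj => by rw [digits_eq j hj]]
  push_cast
  rfl

theorem dvd_choose_of_mod_pow_lt {a : ℕ} (hk : k < p ^ a) (hn : n % p ^ a < k) :
    p ∣ n.choose k := by
  have h := choose_modEq_choose_mod_pow (n := n) hk
  rwa [Nat.choose_eq_zero_of_lt hn, Nat.modEq_zero_iff_dvd] at h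

end Choose

namespace Polynomial

section CharP

variable {R : Type*} [CommRing R] {p : ℕ} [CharP R p] [Fact p.Prime] {a k : ℕ} {P : R[X]}

theorem natDegree_hasseDeriv_add_lt (hk : k < p ^ a) (hP : P.natDegree < p ^ a + k) :
    (hasseDeriv k P).natDegree + k < p ^ a := by
  suffices (hasseDeriv k P).natDegree ≤ p ^ a - k - 1 by omega
  refine natDegree_le_iff_coeff_eq_zero.mpr fun j hj => ?_
  rw [hasseDeriv_coeff]
  by_cases hjP : j + k ≤ P.natDegree
  · have hmod : (j + k) % p ^ a < k := by
      rw [Nat.mod_eq_sub_mod (by omega), Nat.mod_eq_of_lt (by omega)]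
      omega
    rw [(CharP.cast_eq_zero_iff R p _).mpr (Choose.dvd_choose_of_mod_pow_lt hk hmod), zero_mul]
  · rw [coeff_eq_zero_of_natDegree_lt (by omega), mul_zero]

theorem coeff_taylor_pow_sub_one (b : R) (hP : P.natDegree < 2 * p ^ a - 1) :
    (taylor b P).coeff (p ^ a - 1) = P.coeff (p ^ a - 1) := by
  have hp : 0 < p ^ a := pow_pos (Fact.out : p.Prime).pos a
  have hdeg := natDegree_hasseDeriv_add_lt (a := a) (P := P) (k := p ^ a - 1) (by omega) (by omega)
  rw [taylor_coeff, eq_C_of_natDegree_le_zero (by omega : (hasseDeriv _ P).natDegree ≤ 0),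
    eval_C, hasseDeriv_coeff, zero_add, Nat.choose_self, Nat.cast_one, one_mul]

theorem coeff_taylor_pow_sub_two (b : R) (hP : P.natDegree < 2 * p ^ a - 2) :
    (taylor b P).coeff (p ^ a - 2) = P.coeff (p ^ a - 2) - P.coeff (p ^ a - 1) * b := by
  have hp : 2 ≤ p ^ a := by omega
  have hdeg := natDegree_hasseDeriv_add_lt (a := a) (P := P) (k := p ^ a - 2) (by omega) (by omega)
  have hcast : ((p ^ a - 1 : ℕ) : R) = -1 := by
    refine eq_neg_of_add_eq_zero_left ?_
    rw [← Nat.cast_succ, Nat.succ_eq_add_one, Nat.sub_add_cancel (by omega),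
      CharP.cast_eq_zero_iff R p]
    exact dvd_pow_self p (by rintro rfl; simp at hp)
  rw [taylor_coeff, eq_X_add_C_of_natDegree_le_one (by omega : (hasseDeriv _ P).natDegree ≤ 1),
    eval_add, eval_mul, eval_C, eval_C, eval_X, hasseDeriv_coeff, hasseDeriv_coeff, zero_add,
    Nat.choose_self, Nat.cast_one, one_mul, add_comm 1, Nat.choose_succ_self_right,
    show p ^ a - 2 + 1 = p ^ a - 1 by omega, hcast]
  ring

theorem exists_coeff_taylor_pow_sub_one_eq_zero_or_pow_sub_two_eq_zero {F : Type*} [Field F]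
    [CharP F p] {P : F[X]} (hP : P.natDegree < 2 * p ^ a - 2) :
    ∃ b, (taylor b P).coeff (p ^ a - 1) = 0 ∨ (taylor b P).coeff (p ^ a - 2) = 0 := by
  by_cases h : P.coeff (p ^ a - 1) = 0
  · exact ⟨0, Or.inl (by rw [coeff_taylor_pow_sub_one 0 (by omega), h])⟩
  · refine ⟨P.coeff (p ^ a - 2) / P.coeff (p ^ a - 1), Or.inr ?_⟩
    rw [coeff_taylor_pow_sub_two _ hP, mul_div_cancel₀ _ h, sub_self]

end CharP

section Field

variable {F : Type*} [Field F] {P : F[X]} {a b c : F}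

theorem bijective_eval_C_mul_taylor_add_C (ha : a ≠ 0) (hP : Function.Bijective P.eval) :
    Function.Bijective (C a * taylor b P + C c).eval := by
  have hcomp : (C a * taylor b P + C c).eval = (fun y => a * y + c) ∘ P.eval ∘ (· + b) := by
    funext x
    simp [taylor_eval]
  rw [hcomp]
  exact ((Equiv.addRight c).bijective.comp (Equiv.mulLeft₀ a ha).bijective).comp
    (hP.comp (Equiv.addRight b).bijective)

theorem natDegree_C_mul_taylor_add_C (ha : a ≠ 0) :
    (C a * taylor b P + C c).natDegree = P.natDegree := by
  rw [natDegree_add_C, natDegree_C_mul ha, natDegree_taylor]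

theorem monic_C_inv_leadingCoeff_mul_taylor_add_C (hP : 0 < P.natDegree) :
    (C P.leadingCoeff⁻¹ * taylor b P + C c).Monic := by
  have hlc : P.leadingCoeff ≠ 0 := leadingCoeff_ne_zero.mpr (ne_zero_of_natDegree_gt hP)
  refine (monic_C_mul_of_mul_leadingCoeff_eq_one ?_).add_of_left (degree_C_le.trans_lt ?_)
  · rw [leadingCoeff_taylor, inv_mul_cancel₀ hlc]
  · rwa [← natDegree_pos_iff_degree_pos, natDegree_C_mul (inv_ne_zero hlc), natDegree_taylor]

theorem coeff_C_mul_add_C {k : ℕ} (hk : k ≠ 0) (Q : F[X]) :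
    (C a * Q + C c).coeff k = a * Q.coeff k := by
  rw [coeff_add, coeff_C_mul, coeff_C_of_ne_zero hk, add_zero]

end Field

end Polynomial

open Polynomial

theorem b_normalization_general (F : Type*) [Field F] [CharP F 2]
    (i : ℕ) (d : ℕ) (hd1 : 2 ^ i ≤ d) (hd2 : d ≤ 2 ^ (i + 1) - 3)
    (P : Polynomial F) (hdeg : P.natDegree = d)
    (hPP : Function.Bijective fun x => P.eval x) :
    ∃ a b c : F, a ≠ 0 ∧
      (Function.Bijective fun x =>
          (C a * P.comp (X + C b) + C c).eval x) ∧
      (C a * P.comp (X + C b) + C c).Monic ∧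
      (C a * P.comp (X + C b) + C c).natDegree = d ∧
      (C a * P.comp (X + C b) + C c).eval 0 = 0 ∧
      ((C a * P.comp (X + C b) + C c).coeff (2 ^ i - 1) = 0 ∨
        (C a * P.comp (X + C b) + C c).coeff (2 ^ i - 2) = 0) := by
  have hpow : 2 ^ (i + 1) = 2 * 2 ^ i := pow_succ' 2 i
  have hpos : 0 < P.natDegree := hdeg ▸ (Nat.two_pow_pos i).trans_le hd1
  obtain ⟨b, hb⟩ := exists_coeff_taylor_pow_sub_one_eq_zero_or_pow_sub_two_eq_zero
    (p := 2) (a := i) (P := P) (by omega)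
  have ha : P.leadingCoeff⁻¹ ≠ 0 :=
    inv_ne_zero (leadingCoeff_ne_zero.mpr (ne_zero_of_natDegree_gt hpos))
  refine ⟨P.leadingCoeff⁻¹, b, -(P.leadingCoeff⁻¹ * P.eval b), ha, ?_⟩
  simp only [← taylor_apply]
  refine ⟨bijective_eval_C_mul_taylor_add_C ha hPP,
    monic_C_inv_leadingCoeff_mul_taylor_add_C hpos, (natDegree_C_mul_taylor_add_C ha).trans hdeg,
    by simp [taylor_eval], ?_⟩
  rwa [coeff_C_mul_add_C (by omega), coeff_C_mul_add_C (by omega), mul_eq_zero_iff_left ha,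
    mul_eq_zero_iff_left ha]

/-- b-normalization: over a finite field of characteristic 2 with `2^m` elements (`m > 2`),
any permutation polynomial of even degree `d` with `2^i ≤ d ≤ 2^(i+1) - 3` (`i ≥ 2`) can be
transformed by `P ↦ a·P(X + b) + c` (`a ≠ 0`) into a permutation polynomial `Q` that is monic
of degree `d`, satisfies `Q(0) = 0`, and whose coefficient of `X^(2^i - 1)` or of `X^(2^i - 2)`
is zero. -/
theorem b_normalization (F : Type*) [Field F] [Fintype F] (m : ℕ) (hm : 2 < m)
    [CharP F 2] (hcard : Fintype.card F = 2 ^ m)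
    (i : ℕ) (hi : 2 ≤ i) (d : ℕ) (hdeven : Even d) (hd1 : 2 ^ i ≤ d) (hd2 : d ≤ 2 ^ (i + 1) - 3)
    (P : Polynomial F) (hdeg : P.natDegree = d)
    (hPP : Function.Bijective fun x => P.eval x) :
    ∃ a b c : F, a ≠ 0 ∧
      (Function.Bijective fun x =>
          (C a * P.comp (X + C b) + C c).eval x) ∧
      (C a * P.comp (X + C b) + C c).Monic ∧
      (C a * P.comp (X + C b) + C c).natDegree = d ∧
      (C a * P.comp (X + C b) + C c).eval 0 = 0 ∧
      ((C a * P.comp (X + C b) + C c).coeff (2 ^ i - 1) = 0 ∨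
        (C a * P.comp (X + C b) + C c).coeff (2 ^ i - 2) = 0) :=
  b_normalization_general F i d hd1 hd2 P hdeg hPP
end

section
/- Let F be a finite field of cardinality q and let t ∈ F be a primitive element (every nonzero element of F is a power of t). Let P ∈ F[X] be a permutation polynomial that is monic of natural degree d, satisfies P(0) = 0, and whose coefficient of X^e is zero for some index e < d. Let k be a natural number with 1 ≤ k ≤ d − 1, d − k ≠ e, and gcd(k, q − 1) = 1. Then there exists j : ℕ such that the polynomial Q := C (t^(d·j)) * P.comp(C (t⁻¹)^j * X) is a permutation polynomial that is monic of natural degree d, satisfies Q(0) = 0, has its coefficient of X^e equal to zero, and has its coefficient of X^(d−k) lying in {0, 1}. -/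
/-!
The `j`-fold iterate of the F-map is `P.scaleRoots (t ^ j)`: it multiplies the coefficient of
`X ^ i` by `t ^ (j * (d - i))`, and it preserves being a normalized permutation polynomial. The
coefficient `a` of `X ^ (d - k)` thus becomes `a * (t ^ j) ^ k`. As `k` is prime to
`q - 1 = #Fˣ`, the `k`-th power map is a bijection of `Fˣ`, so when `a ≠ 0` some power of the
primitive element `t` has `k`-th power `a⁻¹`.
-/

open Function

theorem exists_pow_eq_of_coprime_card_sub_one {G₀ : Type*} [GroupWithZero G₀] {k : ℕ}
    (hk : k.Coprime (Nat.card G₀ - 1)) {a : G₀} (ha : a ≠ 0) :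
    ∃ b : G₀, b ≠ 0 ∧ b ^ k = a := by
  have hunits : (Nat.card G₀ˣ).Coprime k := Nat.card_units (α := G₀) ▸ hk.symm
  refine ⟨(powCoprime hunits).symm (Units.mk0 a ha), Units.ne_zero _, ?_⟩
  simpa using congrArg Units.val ((powCoprime hunits).apply_symm_apply (Units.mk0 a ha))

namespace Polynomial

variable {K : Type*} [Field K]

theorem C_pow_natDegree_mul_comp_C_inv_mul_X {s : K} (hs : s ≠ 0) (p : K[X]) :
    C (s ^ p.natDegree) * p.comp (C s⁻¹ * X) = p.scaleRoots s := by
  ext i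
  rw [coeff_C_mul, comp_C_mul_X_coeff, coeff_scaleRoots]
  rcases le_or_gt i p.natDegree with hi | hi
  · rw [inv_pow, pow_sub₀ _ hs hi]
    ring
  · simp [coeff_eq_zero_of_natDegree_lt hi]

theorem bijective_eval_scaleRoots {s : K} (hs : s ≠ 0) {p : K[X]}
    (hp : Bijective fun x => p.eval x) : Bijective fun x => (p.scaleRoots s).eval x := by
  have h : (fun x => (p.scaleRoots s).eval x) =
      (s ^ p.natDegree * ·) ∘ (fun x => p.eval x) ∘ (s⁻¹ * ·) := by
    ext x
    simp [← scaleRoots_eval_mul, mul_inv_cancel_left₀ hs]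
  rw [h]
  exact (mulLeft_bijective₀ _ (pow_ne_zero _ hs)).comp
    (hp.comp (mulLeft_bijective₀ _ (inv_ne_zero hs)))

end Polynomial

open Polynomial

theorem Fmap_fix_coeff_coprime_general (F : Type*) [Field F] [Fintype F] (q : ℕ)
    (hq : Fintype.card F = q) (t : F)
    (hprim : ∀ x : F, x ≠ 0 → ∃ n : ℕ, x = t ^ n)
    (P : Polynomial F) (d e : ℕ) (hdeg : P.natDegree = d)
    (hPP : Function.Bijective fun x => P.eval x)
    (hmonic : P.Monic) (h0 : P.eval 0 = 0) (hce : P.coeff e = 0)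
    (k : ℕ) (hk2 : k ≤ d - 1)
    (hgcd : Nat.gcd k (q - 1) = 1) :
    ∃ j : ℕ,
      (Function.Bijective fun x =>
          (C (t ^ (d * j)) * P.comp (C t⁻¹ ^ j * X)).eval x) ∧
      (C (t ^ (d * j)) * P.comp (C t⁻¹ ^ j * X)).Monic ∧
      (C (t ^ (d * j)) * P.comp (C t⁻¹ ^ j * X)).natDegree = d ∧
      (C (t ^ (d * j)) * P.comp (C t⁻¹ ^ j * X)).eval 0 = 0 ∧
      (C (t ^ (d * j)) * P.comp (C t⁻¹ ^ j * X)).coeff e = 0 ∧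
      ((C (t ^ (d * j)) * P.comp (C t⁻¹ ^ j * X)).coeff (d - k) = 0 ∨
        (C (t ^ (d * j)) * P.comp (C t⁻¹ ^ j * X)).coeff (d - k) = 1) := by
  obtain ⟨j, htj, ha⟩ : ∃ j : ℕ, t ^ j ≠ 0 ∧
      (P.coeff (d - k) = 0 ∨ P.coeff (d - k) * (t ^ j) ^ k = 1) := by
    by_cases ha : P.coeff (d - k) = 0
    · exact ⟨0, by simp, .inl ha⟩
    have hk : k.Coprime (Nat.card F - 1) := by rwa [Nat.card_eq_fintype_card, hq]
    obtain ⟨b, hb, hbk⟩ := exists_pow_eq_of_coprime_card_sub_one hk (inv_ne_zero ha)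
    obtain ⟨j, rfl⟩ := hprim b hb
    exact ⟨j, hb, .inr (by rw [hbk, mul_inv_cancel₀ ha])⟩
  have hQ : C (t ^ (d * j)) * P.comp (C t⁻¹ ^ j * X) = P.scaleRoots (t ^ j) := by
    rw [← C_pow_natDegree_mul_comp_C_inv_mul_X htj, hdeg, ← C_pow, inv_pow,
      ← pow_mul, mul_comm j d]
  refine ⟨j, ?_⟩
  rw [hQ]
  refine ⟨bijective_eval_scaleRoots htj hPP, (monic_scaleRoots_iff _).2 hmonic,
    (natDegree_scaleRoots _ _).trans hdeg, ?_, ?_, ?_⟩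
  · rw [← coeff_zero_eq_eval_zero, coeff_scaleRoots, coeff_zero_eq_eval_zero, h0, zero_mul]
  · rw [coeff_scaleRoots, hce, zero_mul]
  · rw [coeff_scaleRoots, hdeg, Nat.sub_sub_self (by omega : k ≤ d)]
    exact ha.imp_left (fun h => by rw [h, zero_mul])

/-- If `k` with `1 ≤ k ≤ d - 1`, `d - k ≠ e`, is relatively prime to `q - 1`, then some iterate
of the F-map transforms a normalized permutation polynomial `P` (monic, `P(0) = 0`, coefficient
of `X^e` zero) into a normalized permutation polynomial whose coefficient of `X^(d-k)` lies
in `{0, 1}`. -/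
theorem Fmap_fix_coeff_coprime (F : Type*) [Field F] [Fintype F] (q : ℕ)
    (hq : Fintype.card F = q) (t : F)
    (hprim : ∀ x : F, x ≠ 0 → ∃ n : ℕ, x = t ^ n)
    (P : Polynomial F) (d e : ℕ) (hdeg : P.natDegree = d)
    (hPP : Function.Bijective fun x => P.eval x)
    (hmonic : P.Monic) (h0 : P.eval 0 = 0) (he : e < d) (hce : P.coeff e = 0)
    (k : ℕ) (hk1 : 1 ≤ k) (hk2 : k ≤ d - 1) (hke : d - k ≠ e)
    (hgcd : Nat.gcd k (q - 1) = 1) :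
    ∃ j : ℕ,
      (Function.Bijective fun x =>
          (C (t ^ (d * j)) * P.comp (C t⁻¹ ^ j * X)).eval x) ∧
      (C (t ^ (d * j)) * P.comp (C t⁻¹ ^ j * X)).Monic ∧
      (C (t ^ (d * j)) * P.comp (C t⁻¹ ^ j * X)).natDegree = d ∧
      (C (t ^ (d * j)) * P.comp (C t⁻¹ ^ j * X)).eval 0 = 0 ∧
      (C (t ^ (d * j)) * P.comp (C t⁻¹ ^ j * X)).coeff e = 0 ∧
      ((C (t ^ (d * j)) * P.comp (C t⁻¹ ^ j * X)).coeff (d - k) = 0 ∨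
        (C (t ^ (d * j)) * P.comp (C t⁻¹ ^ j * X)).coeff (d - k) = 1) :=
  Fmap_fix_coeff_coprime_general F q hq t hprim P d e hdeg hPP hmonic h0 hce k hk2 hgcd
end

section
/- Let F be a finite field of cardinality q and let t ∈ F be a primitive element (every nonzero element of F is a power of t). Let P ∈ F[X] be a permutation polynomial that is monic of natural degree d ≥ 2, satisfies P(0) = 0, and whose coefficient of X^e is zero for some index e < d. Then: (i) if e = d − 1, there exists j : ℕ such that Q := C (t^(d·j)) * P.comp(C (t⁻¹)^j * X) is a permutation polynomial, monic of natural degree d, with Q(0) = 0, coefficient of X^(d−1) equal to zero, and coefficient of X^(d−2) lying in {0, 1, t}; and (ii) if e ≠ d − 1, there exists j : ℕ such that Q := C (t^(d·j)) * P.comp(C (t⁻¹)^j * X) is a permutation polynomial, monic of natural degree d, with Q(0) = 0, coefficient of X^e equal to zero, and coefficient of X^(d−1) lying in {0, 1}. -/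
/-!
The `j`-fold F-map multiplies the coefficient of `X^(d-m)` by `t^(j*m)` and preserves everything
else that makes a polynomial a normalized permutation polynomial. Writing a nonzero coefficient
as `t^n` and using `t^(q-1) = 1`, the choice `j = (n / m) * (q - 2)` turns `t^(n + j*m)` into
`t^(n % m)`, with `n % m < m`.
-/

open Polynomial

lemma FiniteField.pow_add_div_mul_card_sub_two_mul {F : Type*} [Field F] [Fintype F] {t : F}
    (ht : t ≠ 0) (n m : ℕ) : t ^ (n + n / m * (Fintype.card F - 2) * m) = t ^ (n % m) := by
  obtain ⟨q, hq⟩ : ∃ q, Fintype.card F = q + 2 :=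
    ⟨Fintype.card F - 2, by have := Fintype.one_lt_card (α := F); omega⟩
  have hexp : n + n / m * (Fintype.card F - 2) * m
      = n % m + (Fintype.card F - 1) * (m * (n / m)) := by
    rw [hq, Nat.add_sub_cancel, show q + 2 - 1 = q + 1 by omega]
    nth_rw 1 [← Nat.div_add_mod n m]
    ring
  rw [hexp, pow_add, pow_mul, FiniteField.pow_card_sub_one_eq_one t ht, one_pow, mul_one]

namespace Polynomial

variable {F : Type*} [Field F]

/-- The `j`-fold iterate of the F-map on polynomials of natural degree `d`. -/
noncomputable def fMapIter (t : F) (d : ℕ) (P : F[X]) (j : ℕ) : F[X] :=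
  C (t ^ (d * j)) * P.comp (C t⁻¹ ^ j * X)

structure IsNormalizedPerm (P : F[X]) (d e : ℕ) : Prop where
  bijective : Function.Bijective fun x => P.eval x
  monic : P.Monic
  natDegree_eq : P.natDegree = d
  eval_zero : P.eval 0 = 0
  coeff_eq_zero : P.coeff e = 0

variable {t : F} {d : ℕ} {P : F[X]} {j : ℕ}

@[simp]
lemma fMapIter_zero : fMapIter t d P 0 = P := by
  simp [fMapIter]

lemma eval_fMapIter (x : F) :
    (fMapIter t d P j).eval x = t ^ (d * j) * P.eval (t⁻¹ ^ j * x) := by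
  simp [fMapIter, eval_comp]

lemma coeff_fMapIter (k : ℕ) :
    (fMapIter t d P j).coeff k = t ^ (d * j) * (P.coeff k * (t⁻¹ ^ j) ^ k) := by
  rw [fMapIter, ← C_pow, coeff_C_mul, comp_C_mul_X_coeff]

lemma coeff_fMapIter_of_add_eq (ht : t ≠ 0) {k m : ℕ} (hkm : k + m = d) :
    (fMapIter t d P j).coeff k = t ^ (j * m) * P.coeff k := by
  rw [coeff_fMapIter, ← hkm, ← pow_mul, inv_pow, mul_comm (k + m), mul_add, pow_add]
  field_simp

lemma natDegree_fMapIter (ht : t ≠ 0) : (fMapIter t d P j).natDegree = P.natDegree := by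
  rw [fMapIter, ← C_pow, natDegree_C_mul (pow_ne_zero _ ht), natDegree_comp,
    natDegree_C_mul_X _ (pow_ne_zero _ (inv_ne_zero ht)), mul_one]

lemma isNormalizedPerm_fMapIter {e : ℕ} (hP : IsNormalizedPerm P d e) (ht : t ≠ 0) :
    IsNormalizedPerm (fMapIter t d P j) d e where
  bijective := by
    have hfun : (fun x => (fMapIter t d P j).eval x)
        = (t ^ (d * j) * ·) ∘ (fun y => P.eval y) ∘ (t⁻¹ ^ j * ·) := by
      funext x
      exact eval_fMapIter x
    rw [hfun]
    exact ((Equiv.mulLeft₀ _ (pow_ne_zero _ ht)).bijective.comp hP.bijective).comp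
      (Equiv.mulLeft₀ _ (pow_ne_zero _ (inv_ne_zero ht))).bijective
  monic := by
    rw [Monic, leadingCoeff, natDegree_fMapIter ht, hP.natDegree_eq,
      coeff_fMapIter_of_add_eq ht (add_zero d), ← hP.natDegree_eq, hP.monic.coeff_natDegree]
    simp
  natDegree_eq := (natDegree_fMapIter ht).trans hP.natDegree_eq
  eval_zero := by simp [eval_fMapIter, hP.eval_zero]
  coeff_eq_zero := by simp [coeff_fMapIter, hP.coeff_eq_zero]

lemma IsNormalizedPerm.exists_fMapIter_coeff [Fintype F]
    (hprim : ∀ x : F, x ≠ 0 → ∃ n : ℕ, x = t ^ n) {e : ℕ} (hP : IsNormalizedPerm P d e)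
    {k m : ℕ} (hkm : k + m = d) (hm : 0 < m) :
    ∃ j, IsNormalizedPerm (fMapIter t d P j) d e ∧
      ((fMapIter t d P j).coeff k = 0 ∨ ∃ r < m, (fMapIter t d P j).coeff k = t ^ r) := by
  by_cases ha : P.coeff k = 0
  · exact ⟨0, by simpa using hP, by simp [ha]⟩
  obtain ⟨n, hn⟩ := hprim _ ha
  by_cases ht : t = 0
  · -- only possible in `𝔽₂`; the F-map degenerates (`t⁻¹ = 0`), so take `j = 0`
    obtain rfl : n = 0 := by
      by_contra hn0
      exact ha (by rw [hn, ht, zero_pow hn0])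
    exact ⟨0, by simpa using hP, Or.inr ⟨0, hm, by simpa using hn⟩⟩
  refine ⟨n / m * (Fintype.card F - 2), isNormalizedPerm_fMapIter hP ht,
    Or.inr ⟨n % m, Nat.mod_lt n hm, ?_⟩⟩
  rw [coeff_fMapIter_of_add_eq ht hkm, hn, ← pow_add, add_comm,
    FiniteField.pow_add_div_mul_card_sub_two_mul ht]

end Polynomial

theorem Fmap_fix_fourth_coeff_general (F : Type*) [Field F] [Fintype F] (t : F)
    (hprim : ∀ x : F, x ≠ 0 → ∃ n : ℕ, x = t ^ n)
    (P : Polynomial F) (d e : ℕ) (hdeg : P.natDegree = d) (hd : 2 ≤ d)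
    (hPP : Function.Bijective fun x => P.eval x)
    (hmonic : P.Monic) (h0 : P.eval 0 = 0) (hce : P.coeff e = 0) :
    (e = d - 1 →
      ∃ j : ℕ,
        (Function.Bijective fun x =>
            (C (t ^ (d * j)) * P.comp (C t⁻¹ ^ j * X)).eval x) ∧
        (C (t ^ (d * j)) * P.comp (C t⁻¹ ^ j * X)).Monic ∧
        (C (t ^ (d * j)) * P.comp (C t⁻¹ ^ j * X)).natDegree = d ∧
        (C (t ^ (d * j)) * P.comp (C t⁻¹ ^ j * X)).eval 0 = 0 ∧
        (C (t ^ (d * j)) * P.comp (C t⁻¹ ^ j * X)).coeff (d - 1) = 0 ∧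
        ((C (t ^ (d * j)) * P.comp (C t⁻¹ ^ j * X)).coeff (d - 2) = 0 ∨
          (C (t ^ (d * j)) * P.comp (C t⁻¹ ^ j * X)).coeff (d - 2) = 1 ∨
          (C (t ^ (d * j)) * P.comp (C t⁻¹ ^ j * X)).coeff (d - 2) = t)) ∧
    (e ≠ d - 1 →
      ∃ j : ℕ,
        (Function.Bijective fun x =>
            (C (t ^ (d * j)) * P.comp (C t⁻¹ ^ j * X)).eval x) ∧
        (C (t ^ (d * j)) * P.comp (C t⁻¹ ^ j * X)).Monic ∧
        (C (t ^ (d * j)) * P.comp (C t⁻¹ ^ j * X)).natDegree = d ∧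
        (C (t ^ (d * j)) * P.comp (C t⁻¹ ^ j * X)).eval 0 = 0 ∧
        (C (t ^ (d * j)) * P.comp (C t⁻¹ ^ j * X)).coeff e = 0 ∧
        ((C (t ^ (d * j)) * P.comp (C t⁻¹ ^ j * X)).coeff (d - 1) = 0 ∨
          (C (t ^ (d * j)) * P.comp (C t⁻¹ ^ j * X)).coeff (d - 1) = 1)) := by
  have hP : IsNormalizedPerm P d e := ⟨hPP, hmonic, hdeg, h0, hce⟩
  constructor
  · rintro rfl
    obtain ⟨j, hQ, hc⟩ :=
      hP.exists_fMapIter_coeff hprim (k := d - 2) (m := 2) (by omega) two_pos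
    refine ⟨j, hQ.bijective, hQ.monic, hQ.natDegree_eq, hQ.eval_zero, hQ.coeff_eq_zero, ?_⟩
    rcases hc with hc | ⟨r, hr, hc⟩
    · exact Or.inl hc
    · interval_cases r
      · exact Or.inr (Or.inl (by rwa [pow_zero] at hc))
      · exact Or.inr (Or.inr (by rwa [pow_one] at hc))
  · intro _
    obtain ⟨j, hQ, hc⟩ :=
      hP.exists_fMapIter_coeff hprim (k := d - 1) (m := 1) (by omega) one_pos
    refine ⟨j, hQ.bijective, hQ.monic, hQ.natDegree_eq, hQ.eval_zero, hQ.coeff_eq_zero, ?_⟩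
    rcases hc with hc | ⟨r, hr, hc⟩
    · exact Or.inl hc
    · obtain rfl : r = 0 := by omega
      exact Or.inr (by rwa [pow_zero] at hc)

/-- Every normalized permutation polynomial can be transformed by some iterate of the F-map
so that, in addition, the coefficient of `X^(d-2)` lies in `{0, 1, t}` (when the fixed position
is `e = d - 1`), or the coefficient of `X^(d-1)` lies in `{0, 1}` (when `e ≠ d - 1`). -/
theorem Fmap_fix_fourth_coeff (F : Type*) [Field F] [Fintype F] (q : ℕ)
    (hq : Fintype.card F = q) (t : F)
    (hprim : ∀ x : F, x ≠ 0 → ∃ n : ℕ, x = t ^ n)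
    (P : Polynomial F) (d e : ℕ) (hdeg : P.natDegree = d) (hd : 2 ≤ d)
    (hPP : Function.Bijective fun x => P.eval x)
    (hmonic : P.Monic) (h0 : P.eval 0 = 0) (he : e < d) (hce : P.coeff e = 0) :
    (e = d - 1 →
      ∃ j : ℕ,
        (Function.Bijective fun x =>
            (C (t ^ (d * j)) * P.comp (C t⁻¹ ^ j * X)).eval x) ∧
        (C (t ^ (d * j)) * P.comp (C t⁻¹ ^ j * X)).Monic ∧
        (C (t ^ (d * j)) * P.comp (C t⁻¹ ^ j * X)).natDegree = d ∧
        (C (t ^ (d * j)) * P.comp (C t⁻¹ ^ j * X)).eval 0 = 0 ∧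
        (C (t ^ (d * j)) * P.comp (C t⁻¹ ^ j * X)).coeff (d - 1) = 0 ∧
        ((C (t ^ (d * j)) * P.comp (C t⁻¹ ^ j * X)).coeff (d - 2) = 0 ∨
          (C (t ^ (d * j)) * P.comp (C t⁻¹ ^ j * X)).coeff (d - 2) = 1 ∨
          (C (t ^ (d * j)) * P.comp (C t⁻¹ ^ j * X)).coeff (d - 2) = t)) ∧
    (e ≠ d - 1 →
      ∃ j : ℕ,
        (Function.Bijective fun x =>
            (C (t ^ (d * j)) * P.comp (C t⁻¹ ^ j * X)).eval x) ∧
        (C (t ^ (d * j)) * P.comp (C t⁻¹ ^ j * X)).Monic ∧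
        (C (t ^ (d * j)) * P.comp (C t⁻¹ ^ j * X)).natDegree = d ∧
        (C (t ^ (d * j)) * P.comp (C t⁻¹ ^ j * X)).eval 0 = 0 ∧
        (C (t ^ (d * j)) * P.comp (C t⁻¹ ^ j * X)).coeff e = 0 ∧
        ((C (t ^ (d * j)) * P.comp (C t⁻¹ ^ j * X)).coeff (d - 1) = 0 ∨
          (C (t ^ (d * j)) * P.comp (C t⁻¹ ^ j * X)).coeff (d - 1) = 1)) :=
  Fmap_fix_fourth_coeff_general F t hprim P d e hdeg hd hPP hmonic h0 hce
end
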